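/- Let S be the monoid presented by ⟨a, b | a*b*a*b = 1, b*a*b*a = 1⟩. The power semigroup P(S), consisting of all subsets of S with setwise multiplication X*Y = {x*y : x ∈ X, y ∈ Y}, is not an LEF semigroup. -/

import Mathlib

/-!
In a finite semigroup, `e * x = x = x * e`, `e * y = y` and `x * y = e` force `y * x = e`,
and an LEF semigroup inherits this through finite images of `{e, x, y, y * x}`. In `P(S)` it
fails: `S` acts on `ℤ` with `a` as `z ↦ z + 1`, `b * a * b` as `z ↦ z - 1` and `a * b` as the
transposition `(0 1)`. With `E` the submonoid fixing every negative integer, `A = E a E` and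
`B = E (b a b) E` satisfy `E A = A = A E`, `E B = B` and `A B = E`, but `B A` contains
`(b a b)(a b) a`, which moves `-1`.
-/

open Pointwise

namespace Stmt5

/-- A semigroup `S` is LEF if for every finite subset `H` of `S` there exist a finite
semigroup `F` and a function `f : S → F` injective on `H` such that
`f (x * y) = f x * f y` whenever `x, y, x * y ∈ H`. -/
def IsLEF (S : Type*) [Semigroup S] : Prop :=
  ∀ H : Finset S, ∃ (F : Type) (_ : Semigroup F) (_ : Fintype F) (f : S → F),
    Set.InjOn f ↑H ∧
      ∀ x ∈ H, ∀ y ∈ H, x * y ∈ H → f (x * y) = f x * f y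

/-- The generator `a` of the free monoid on two generators. -/
def a : FreeMonoid (Fin 2) := FreeMonoid.of 0

/-- The generator `b` of the free monoid on two generators. -/
def b : FreeMonoid (Fin 2) := FreeMonoid.of 1

/-- The defining relations `a * b * a * b = 1` and `b * a * b * a = 1`. -/
def rel : FreeMonoid (Fin 2) → FreeMonoid (Fin 2) → Prop :=
  fun x y => (x = a * b * a * b ∧ y = 1) ∨ (x = b * a * b * a ∧ y = 1)

/-- The monoid `S = ⟨a, b ∣ abab = 1, baba = 1⟩`. -/
def S : Type := (conGen rel).Quotient

instance : Monoid S := Con.monoid _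

open DoubleCoset

section LocalMonoid

variable {F : Type*} [Semigroup F] {e x y : F}

abbrev cornerMonoid (he : IsIdempotentElem e) : Monoid (Subsemigroup.corner e) where
  one := ⟨e, (Subsemigroup.mem_corner_iff he).2 ⟨he.eq, he.eq⟩⟩
  one_mul r := Subtype.ext ((Subsemigroup.mem_corner_iff he).1 r.2).1
  mul_one r := Subtype.ext ((Subsemigroup.mem_corner_iff he).1 r.2).2

/-- Dedekind-finiteness of the finite local monoid `e F e`, applied to `x` and `y * e`. -/
theorem mul_eq_symm_of_finite [Finite F] (hex : e * x = x) (hxe : x * e = x) (hey : e * y = y)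
    (hxy : x * y = e) : y * x = e := by
  have he : IsIdempotentElem e := by
    rw [IsIdempotentElem]
    nth_rw 2 [← hxy]
    rw [← mul_assoc, hex, hxy]
  let _ := cornerMonoid he
  let x' : Subsemigroup.corner e := ⟨x, (Subsemigroup.mem_corner_iff he).2 ⟨hex, hxe⟩⟩
  let y' : Subsemigroup.corner e :=
    ⟨y * e, (Subsemigroup.mem_corner_iff he).2
      ⟨by rw [← mul_assoc, hey], by rw [mul_assoc, he.eq]⟩⟩
  have hx'y' : x' * y' = 1 := Subtype.ext (show x * (y * e) = e by rw [← mul_assoc, hxy, he.eq])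
  have hy'x' : y * e * x = e := congrArg Subtype.val (mul_eq_one_symm hx'y')
  rwa [mul_assoc, hex] at hy'x'

end LocalMonoid

theorem IsLEF.mul_eq_symm {P : Type*} [Semigroup P] (hP : IsLEF P) {e x y : P}
    (hex : e * x = x) (hxe : x * e = x) (hey : e * y = y) (hxy : x * y = e) : y * x = e := by
  classical
  set H : Finset P := {e, x, y, y * x}
  obtain ⟨F, _, _, f, hinj, hf⟩ := hP H
  have hom {u v w : P} (huv : u * v = w) (hu : u ∈ H) (hv : v ∈ H) (hw : w ∈ H) :
      f u * f v = f w := by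
    subst huv
    exact (hf u hu v hv hw).symm
  have hfyx : f (y * x) = f e := by
    rw [← hom rfl (by simp [H]) (by simp [H]) (by simp [H])]
    exact mul_eq_symm_of_finite (hom hex (by simp [H]) (by simp [H]) (by simp [H]))
      (hom hxe (by simp [H]) (by simp [H]) (by simp [H]))
      (hom hey (by simp [H]) (by simp [H]) (by simp [H]))
      (hom hxy (by simp [H]) (by simp [H]) (by simp [H]))
  exact hinj (by simp [H]) (by simp [H]) hfyx

section DoubleCoset

variable {M : Type*} [Monoid M] (E : Submonoid M)

theorem submonoid_mul_doubleCoset (u : M) :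
    (E : Set M) * doubleCoset u E E = doubleCoset u E E := by
  rw [doubleCoset, ← mul_assoc, ← mul_assoc, E.coe_mul_self_eq]

theorem doubleCoset_mul_submonoid (u : M) :
    doubleCoset u E E * (E : Set M) = doubleCoset u E E := by
  rw [doubleCoset, mul_assoc, E.coe_mul_self_eq]

theorem doubleCoset_mul_doubleCoset_eq_submonoid {u v : M} (huv : u * v = 1)
    (hconj : ∀ g ∈ E, u * g * v ∈ E) : doubleCoset u E E * doubleCoset v E E = E := by
  ext g
  constructor
  · intro hg
    obtain ⟨_, hp, _, hq, rfl⟩ := Set.mem_mul.1 hg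
    obtain ⟨x, hx, y, hy, rfl⟩ := mem_doubleCoset.1 hp
    obtain ⟨x', hx', y', hy', rfl⟩ := mem_doubleCoset.1 hq
    have : x * u * y * (x' * v * y') = x * (u * (y * x') * v) * y' := by simp only [mul_assoc]
    rw [this]
    exact E.mul_mem (E.mul_mem hx (hconj _ (E.mul_mem hy hx'))) hy'
  · intro hg
    refine ⟨g * u * 1, mem_doubleCoset.2 ⟨g, hg, 1, E.one_mem, rfl⟩,
      1 * v * 1, mem_doubleCoset.2 ⟨1, E.one_mem, 1, E.one_mem, rfl⟩, ?_⟩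
    simp only [mul_one, one_mul, mul_assoc, huv]

theorem mul_mem_doubleCoset_mul_doubleCoset {u v k : M} (hk : k ∈ E) :
    v * k * u ∈ doubleCoset v E E * doubleCoset u E E :=
  ⟨1 * v * k, mem_doubleCoset.2 ⟨1, E.one_mem, k, hk, rfl⟩,
    1 * u * 1, mem_doubleCoset.2 ⟨1, E.one_mem, 1, E.one_mem, rfl⟩, by simp only [one_mul, mul_one]⟩

end DoubleCoset

/-- `S` acts on `ℤ` with `a` the shift `z ↦ z + 1` and `a * b` the transposition `(0 1)`. -/
def actFree : FreeMonoid (Fin 2) →* Equiv.Perm ℤ :=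
  FreeMonoid.lift ![Equiv.addRight 1, (Equiv.addRight 1)⁻¹ * Equiv.swap 0 1]

theorem actFree_a : actFree a = Equiv.addRight 1 := by simp [actFree, a]

theorem actFree_b : actFree b = (Equiv.addRight 1)⁻¹ * Equiv.swap 0 1 := by simp [actFree, b]

theorem actFree_rel {x y : FreeMonoid (Fin 2)} (h : rel x y) : actFree x = actFree y := by
  rcases h with ⟨rfl, rfl⟩ | ⟨rfl, rfl⟩ <;>
    simp only [map_mul, map_one, actFree_a, actFree_b, mul_assoc, mul_inv_cancel_left,
      Equiv.swap_mul_self_mul, Equiv.swap_mul_self, inv_mul_cancel]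

def S.mk : FreeMonoid (Fin 2) →* S := Con.mk' _

def S.toPerm : S →* Equiv.Perm ℤ := Con.lift _ actFree (Con.conGen_le.mpr fun _ _ => actFree_rel)

theorem S.toPerm_mk (w : FreeMonoid (Fin 2)) : S.toPerm (S.mk w) = actFree w :=
  Con.lift_mk' _ _

def S.up : S := S.mk a

def S.down : S := S.mk (b * a * b)

def S.swap : S := S.mk (a * b)

theorem S.up_mul_down : S.up * S.down = 1 := by
  rw [S.up, S.down, ← map_mul, ← mul_assoc, ← mul_assoc]
  exact (Con.eq _).mpr (ConGen.Rel.of _ _ (Or.inl ⟨rfl, rfl⟩))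

theorem S.toPerm_up (z : ℤ) : S.toPerm S.up z = z + 1 := by
  simp [S.up, S.toPerm_mk, actFree_a]

theorem S.toPerm_down (z : ℤ) : S.toPerm S.down z = z - 1 := by
  simp only [S.down, S.toPerm_mk, map_mul, actFree_a, actFree_b, mul_assoc, mul_inv_cancel_left]
  simp [sub_eq_add_neg]

theorem S.toPerm_swap : S.toPerm S.swap = Equiv.swap 0 1 := by
  simp only [S.swap, S.toPerm_mk, map_mul, actFree_a, actFree_b, mul_inv_cancel_left]

def fixingNeg : Submonoid S :=
  (fixingSubgroup (Equiv.Perm ℤ) (Set.Iio (0 : ℤ))).toSubmonoid.comap S.toPerm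

theorem mem_fixingNeg {g : S} : g ∈ fixingNeg ↔ ∀ z < 0, S.toPerm g z = z := by
  simp [fixingNeg, mem_fixingSubgroup_iff, Equiv.Perm.smul_def]

theorem up_mul_mul_down_mem_fixingNeg {g : S} (hg : g ∈ fixingNeg) :
    S.up * g * S.down ∈ fixingNeg := by
  rw [mem_fixingNeg] at hg ⊢
  intro z hz
  simp [S.toPerm_up, S.toPerm_down, hg (z - 1) (by omega)]

theorem swap_mem_fixingNeg : S.swap ∈ fixingNeg := by
  rw [mem_fixingNeg, S.toPerm_swap]
  intro z hz
  exact Equiv.swap_apply_of_ne_of_ne (by omega) (by omega)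

theorem down_mul_swap_mul_up_not_mem_fixingNeg : S.down * S.swap * S.up ∉ fixingNeg := by
  rw [mem_fixingNeg]
  intro h
  have := h (-1) (by norm_num)
  simp [S.toPerm_up, S.toPerm_down, S.toPerm_swap] at this

/-- The power semigroup `P(S)` of all subsets of `S` under setwise multiplication
`X * Y = {x * y : x ∈ X, y ∈ Y}` is not an LEF semigroup. -/
theorem powerSemigroup_not_isLEF : ¬ IsLEF (Set S) := by
  intro hLEF
  have hBA := hLEF.mul_eq_symm (submonoid_mul_doubleCoset fixingNeg S.up)
    (doubleCoset_mul_submonoid fixingNeg S.up) (submonoid_mul_doubleCoset fixingNeg S.down)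
    (doubleCoset_mul_doubleCoset_eq_submonoid fixingNeg S.up_mul_down
      fun _ => up_mul_mul_down_mem_fixingNeg)
  have hmem : S.down * S.swap * S.up ∈ doubleCoset S.down fixingNeg fixingNeg *
      doubleCoset S.up fixingNeg fixingNeg :=
    mul_mem_doubleCoset_mul_doubleCoset fixingNeg swap_mem_fixingNeg
  rw [hBA] at hmem
  exact down_mul_swap_mul_up_not_mem_fixingNeg hmem

end Stmt5
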